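/- Let R be a commutative local ring and p ∈ R a nonzerodivisor such that pR is a prime ideal. Let M be an R-module equipped with R-linear endomorphisms F₁, F₂, K satisfying: F₁ and F₂ are idempotent with F₁ + F₂ = id and F₁∘F₂ = F₂∘F₁ = 0; K∘F₁ = F₂∘K; K² = p·id; and the images F₁M and F₂M are free R-modules of rank 1. Then (M, F₁, F₂, K) is isomorphic, via an R-linear isomorphism intertwining the respective operators, to exactly one of the two standard data (T, E₁, E₂, J) and (T', E₁, E₂, J') below; in particular, these two standard data are not isomorphic to each other. -/

import Mathlib

/-!
Splitting `M = F₁M ⊕ F₂M` along the given bases identifies `(M, F₁, F₂)` with `(R², E₁, E₂)`,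
and then `K` becomes `(u, v) ↦ (a v, b u)` with `a b = p`. The automorphisms of `(R², E₁, E₂)`
are the diagonal matrices with unit entries; conjugating by one multiplies `a` by a unit and
divides `b` by it. Hence the datum is isomorphic to `J` (where `(a, b) = (1, p)`) iff `a` is a
unit, and to `J'` (where `(a, b) = (p, 1)`) iff `b` is a unit. As `p` is a non-zero-divisor
generating a prime ideal, exactly one of `a`, `b` is a unit.
-/

section

variable (R : Type*) [CommRing R] (p : R)

/-- The endomorphism `E₁(u,v) = (u,0)` of the standard module `R²`. -/
def E₁ : R × R →ₗ[R] R × R := (LinearMap.inl R R R).comp (LinearMap.fst R R R)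

/-- The endomorphism `E₂(u,v) = (0,v)` of the standard module `R²`. -/
def E₂ : R × R →ₗ[R] R × R := (LinearMap.inr R R R).comp (LinearMap.snd R R R)

/-- The endomorphism `J(u,v) = (v, p·u)` of the standard module `T`. -/
def J : R × R →ₗ[R] R × R :=
  (LinearMap.inl R R R).comp (LinearMap.snd R R R)
    + (LinearMap.inr R R R).comp (p • LinearMap.fst R R R)

/-- The endomorphism `J'(u,v) = (p·v, u)` of the twisted standard module `T'`. -/
def J' : R × R →ₗ[R] R × R :=
  (LinearMap.inl R R R).comp (p • LinearMap.snd R R R)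
    + (LinearMap.inr R R R).comp (LinearMap.fst R R R)

end

section StandardModules

variable {R : Type*} [CommRing R]

@[simp]
theorem E₁_apply (x : R × R) : E₁ R x = (x.1, 0) := by
  simp [E₁]

@[simp]
theorem E₂_apply (x : R × R) : E₂ R x = (0, x.2) := by
  simp [E₂]

def offDiagEnd (a b : R) : Module.End R (R × R) :=
  (a • LinearMap.snd R R R).prod (b • LinearMap.fst R R R)

@[simp]
theorem offDiagEnd_apply (a b : R) (x : R × R) : offDiagEnd a b x = (a * x.2, b * x.1) := rfl

theorem J_eq_offDiagEnd (p : R) : J R p = offDiagEnd 1 p := by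
  ext <;> simp [J]

theorem J'_eq_offDiagEnd (p : R) : J' R p = offDiagEnd p 1 := by
  ext <;> simp [J']

theorem offDiagEnd_comp_self (a b : R) :
    offDiagEnd a b ∘ₗ offDiagEnd a b = (a * b) • LinearMap.id := by
  ext <;> simp [mul_comm]

theorem eq_offDiagEnd_of_comp_E₁ (L : Module.End R (R × R)) (h : L ∘ₗ E₁ R = E₂ R ∘ₗ L) :
    L = offDiagEnd (L (0, 1)).1 (L (1, 0)).2 := by
  have h₁ : (L (1, 0)).1 = 0 := by simpa using congr(($h (1, 0)).1)
  have h₂ : (L (0, 1)).2 = 0 := by simpa [Prod.mk_zero_zero] using congr(($h (0, 1)).2).symm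
  ext <;> simp [h₁, h₂]

end StandardModules

namespace LinearEquiv

variable {R M N P : Type*} [CommSemiring R] [AddCommMonoid M] [Module R M]
  [AddCommMonoid N] [Module R N] [AddCommMonoid P] [Module R P]

def Intertwines (e : M ≃ₗ[R] N) (f : Module.End R M) (g : Module.End R N) : Prop :=
  e.toLinearMap ∘ₗ f = g ∘ₗ e.toLinearMap

variable {e : M ≃ₗ[R] N} {f f' : Module.End R M} {g g' : Module.End R N}

theorem intertwines_iff : e.Intertwines f g ↔ ∀ x, e (f x) = g (e x) :=
  LinearMap.ext_iff

theorem intertwines_conj (e : M ≃ₗ[R] N) (f : Module.End R M) : e.Intertwines f (e.conj f) := by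
  ext; simp

theorem Intertwines.eq_conj (h : e.Intertwines f g) : g = e.conj f := by
  ext x; simpa using (intertwines_iff.mp h (e.symm x)).symm

theorem Intertwines.comp (h : e.Intertwines f g) (h' : e.Intertwines f' g') :
    e.Intertwines (f ∘ₗ f') (g ∘ₗ g') := by
  rw [Intertwines, ← LinearMap.comp_assoc, h, LinearMap.comp_assoc, h', LinearMap.comp_assoc]

theorem Intertwines.symm (h : e.Intertwines f g) : e.symm.Intertwines g f := by
  refine intertwines_iff.mpr fun x => e.injective ?_
  simp [intertwines_iff.mp h]

theorem intertwines_smul_id (e : M ≃ₗ[R] N) (c : R) :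
    e.Intertwines (c • LinearMap.id) (c • LinearMap.id) := by
  ext; simp

theorem intertwines_trans_iff {e₀ : M ≃ₗ[R] N} {e : N ≃ₗ[R] P} {h : Module.End R P}
    (h₀ : e₀.Intertwines f g) : (e₀.trans e).Intertwines f h ↔ e.Intertwines g h := by
  rw [Intertwines, coe_trans, LinearMap.comp_assoc, h₀, ← LinearMap.comp_assoc,
    ← LinearMap.comp_assoc, eq_comp_toLinearMap_iff]
  rfl

theorem exists_intertwines_iff_of_intertwines {F₁ F₂ K : Module.End R M}
    {G₁ G₂ L : Module.End R N} {H₁ H₂ L' : Module.End R P} (e₀ : M ≃ₗ[R] N)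
    (h₁ : e₀.Intertwines F₁ G₁) (h₂ : e₀.Intertwines F₂ G₂) (h₃ : e₀.Intertwines K L) :
    (∃ e : M ≃ₗ[R] P, e.Intertwines F₁ H₁ ∧ e.Intertwines F₂ H₂ ∧ e.Intertwines K L') ↔
      ∃ e : N ≃ₗ[R] P, e.Intertwines G₁ H₁ ∧ e.Intertwines G₂ H₂ ∧ e.Intertwines L L' := by
  constructor
  · rintro ⟨e, he⟩
    refine ⟨e₀.symm.trans e, ?_⟩
    rwa [← intertwines_trans_iff h₁, ← intertwines_trans_iff h₂, ← intertwines_trans_iff h₃,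
      ← trans_assoc, self_trans_symm, refl_trans]
  · rintro ⟨e, he⟩
    exact ⟨e₀.trans e, by rwa [intertwines_trans_iff h₁, intertwines_trans_iff h₂,
      intertwines_trans_iff h₃]⟩

end LinearEquiv

section Automorphisms

variable {R : Type*} [CommRing R]

theorem apply_eq_of_commute_E₁ {f : Module.End R (R × R)} (h : Commute f (E₁ R))
    (x : R × R) : f x = ((f (1, 0)).1 * x.1, (f (0, 1)).2 * x.2) := by
  have h₁ : (f (1, 0)).2 = 0 := by simpa using congr(($h (1, 0)).2)
  have h₂ : (f (0, 1)).1 = 0 := by simpa [Prod.mk_zero_zero] using congr(($h (0, 1)).1).symm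
  have hx : x = x.1 • ((1, 0) : R × R) + x.2 • (0, 1) := by ext <;> simp
  conv_lhs => rw [hx, map_add, map_smul, map_smul]
  ext <;> simp [h₁, h₂, mul_comm]

theorem exists_units_of_intertwines_E₁ (e : (R × R) ≃ₗ[R] R × R)
    (h : e.Intertwines (E₁ R) (E₁ R)) : ∃ s t : Rˣ, ∀ x, e x = (s * x.1, t * x.2) := by
  have he := apply_eq_of_commute_E₁ (f := e.toLinearMap) h
  have he' := apply_eq_of_commute_E₁ (f := e.symm.toLinearMap) h.symm
  simp only [LinearEquiv.coe_coe] at he he'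
  have h₁ := e.apply_symm_apply (1, 0)
  have h₂ := e.apply_symm_apply (0, 1)
  rw [he, he'] at h₁ h₂
  simp only [Prod.mk.injEq, mul_one, mul_zero] at h₁ h₂
  exact ⟨⟨_, _, h₁.1, by rw [mul_comm, h₁.1]⟩, ⟨_, _, h₂.2, by rw [mul_comm, h₂.2]⟩, he⟩

theorem exists_intertwines_offDiagEnd_iff (a b a' b' : R) :
    (∃ e : (R × R) ≃ₗ[R] R × R, e.Intertwines (E₁ R) (E₁ R) ∧ e.Intertwines (E₂ R) (E₂ R) ∧
        e.Intertwines (offDiagEnd a b) (offDiagEnd a' b')) ↔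
      ∃ u : Rˣ, a' = u * a ∧ b = u * b' := by
  constructor
  · rintro ⟨e, h₁, -, hK⟩
    obtain ⟨s, t, he⟩ := exists_units_of_intertwines_E₁ e h₁
    have ha := congr(($(LinearEquiv.intertwines_iff.mp hK (0, 1))).1)
    have hb := congr(($(LinearEquiv.intertwines_iff.mp hK (1, 0))).2)
    simp only [offDiagEnd_apply, he, mul_zero, mul_one] at ha hb
    refine ⟨s * t⁻¹, ?_, ?_⟩
    · rw [Units.val_mul, mul_right_comm, ha, Units.mul_inv_cancel_right]
    · rw [mul_comm s, Units.val_mul, mul_assoc, Units.eq_inv_mul_iff_mul_eq, hb, mul_comm]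
  · rintro ⟨u, rfl, rfl⟩
    refine ⟨(LinearEquiv.smulOfUnit u).prodCongr (LinearEquiv.refl R R), ?_, ?_, ?_⟩ <;>
      ext <;> simp [LinearEquiv.smulOfUnit, Units.smul_def, mul_comm]

theorem exists_intertwines_offDiagEnd_J_iff {p a b : R} (hab : a * b = p) :
    (∃ e : (R × R) ≃ₗ[R] R × R, e.Intertwines (E₁ R) (E₁ R) ∧ e.Intertwines (E₂ R) (E₂ R) ∧
        e.Intertwines (offDiagEnd a b) (J R p)) ↔ IsUnit a := by
  rw [J_eq_offDiagEnd, exists_intertwines_offDiagEnd_iff]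
  refine ⟨fun ⟨u, hu, _⟩ => .of_mul_eq_one_right (u : R) hu.symm, fun ⟨u, hu⟩ => ⟨u⁻¹, ?_, ?_⟩⟩
  · simp [← hu]
  · rw [← hab, ← hu, Units.inv_mul_cancel_left]

theorem exists_intertwines_offDiagEnd_J'_iff {p a b : R} (hab : a * b = p) :
    (∃ e : (R × R) ≃ₗ[R] R × R, e.Intertwines (E₁ R) (E₁ R) ∧ e.Intertwines (E₂ R) (E₂ R) ∧
        e.Intertwines (offDiagEnd a b) (J' R p)) ↔ IsUnit b := by
  rw [J'_eq_offDiagEnd, exists_intertwines_offDiagEnd_iff]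
  refine ⟨fun ⟨u, _, hu⟩ => hu ▸ by simp, fun ⟨u, hu⟩ => ⟨u, ?_, ?_⟩⟩ <;>
    simp [← hab, ← hu, mul_comm]

end Automorphisms

section Decomposition

variable {R M : Type*} [CommRing R] [AddCommGroup M] [Module R M] {F₁ F₂ : Module.End R M}

def equivRangeProdRange (hF₁ : F₁ ∘ₗ F₁ = F₁) (hF₂ : F₂ ∘ₗ F₂ = F₂)
    (hsum : F₁ + F₂ = LinearMap.id) (h₁₂ : F₁ ∘ₗ F₂ = 0) (h₂₁ : F₂ ∘ₗ F₁ = 0) :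
    M ≃ₗ[R] LinearMap.range F₁ × LinearMap.range F₂ :=
  .ofLinearMap (F₁.rangeRestrict.prod F₂.rangeRestrict)
    ((LinearMap.range F₁).subtype.coprod (LinearMap.range F₂).subtype)
    (by
      simp only [LinearMap.ext_iff, LinearMap.comp_apply, LinearMap.zero_apply] at hF₁ hF₂ h₁₂ h₂₁
      ext ⟨_, x, rfl⟩ <;> simp [hF₁, hF₂, h₁₂, h₂₁])
    (by
      ext x; simpa using congr($hsum x))

theorem exists_equiv_prod_intertwines_E₁_E₂ (b₁ : Module.Basis (Fin 1) R (LinearMap.range F₁))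
    (b₂ : Module.Basis (Fin 1) R (LinearMap.range F₂)) (hF₁ : F₁ ∘ₗ F₁ = F₁)
    (hF₂ : F₂ ∘ₗ F₂ = F₂) (hsum : F₁ + F₂ = LinearMap.id) (h₁₂ : F₁ ∘ₗ F₂ = 0)
    (h₂₁ : F₂ ∘ₗ F₁ = 0) :
    ∃ e : M ≃ₗ[R] R × R, e.Intertwines F₁ (E₁ R) ∧ e.Intertwines F₂ (E₂ R) := by
  let c₁ := b₁.equivFun.trans (LinearEquiv.funUnique (Fin 1) R R)
  let c₂ := b₂.equivFun.trans (LinearEquiv.funUnique (Fin 1) R R)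
  refine ⟨(equivRangeProdRange hF₁ hF₂ hsum h₁₂ h₂₁).trans (c₁.prodCongr c₂), ?_, ?_⟩ <;>
    refine LinearEquiv.intertwines_iff.mpr fun x => ?_
  all_goals
    simp only [LinearMap.ext_iff, LinearMap.comp_apply, LinearMap.zero_apply] at hF₁ hF₂ h₁₂ h₂₁
    simp [equivRangeProdRange, LinearMap.rangeRestrict, LinearMap.codRestrict, hF₁, hF₂, h₁₂, h₂₁]

end Decomposition

theorem exists_intertwines_offDiagEnd {R M : Type*} [CommRing R] [AddCommGroup M] [Module R M]
    {p : R} {F₁ F₂ K : Module.End R M} (e : M ≃ₗ[R] R × R) (hE₁ : e.Intertwines F₁ (E₁ R))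
    (hE₂ : e.Intertwines F₂ (E₂ R)) (hKF : K ∘ₗ F₁ = F₂ ∘ₗ K)
    (hK2 : K ∘ₗ K = p • LinearMap.id) :
    ∃ a b : R, a * b = p ∧ e.Intertwines K (offDiagEnd a b) := by
  set L := e.conj K
  have hL : e.Intertwines K L := e.intertwines_conj K
  have hLE : L ∘ₗ E₁ R = E₂ R ∘ₗ L := by
    rw [(hL.comp hE₁).eq_conj, (hE₂.comp hL).eq_conj, hKF]
  have hL2 : L ∘ₗ L = p • LinearMap.id := by
    rw [(hL.comp hL).eq_conj, (e.intertwines_smul_id p).eq_conj, hK2]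
  obtain ⟨a, b, hab⟩ : ∃ a b, L = offDiagEnd a b := ⟨_, _, eq_offDiagEnd_of_comp_E₁ L hLE⟩
  rw [hab, offDiagEnd_comp_self] at hL2
  exact ⟨a, b, by simpa using congr(($hL2 (1, 0)).1), hab ▸ hL⟩

theorem xor_isUnit_of_mul_eq {R : Type*} [CommRing R] {p a b : R} (hp : p ∈ nonZeroDivisors R)
    (hprime : (Ideal.span {p}).IsPrime) (hab : a * b = p) : Xor (IsUnit a) (IsUnit b) := by
  have isUnit_of_dvd {x y : R} (hxy : x * y = p) (hx : p ∣ x) : IsUnit y := by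
    obtain ⟨c, rfl⟩ := hx
    refine .of_mul_eq_one_right c ((mul_cancel_left_mem_nonZeroDivisors hp).mp ?_)
    rw [← mul_assoc, hxy, mul_one]
  rw [xor_iff_or_and_not_and]
  refine ⟨?_, fun ⟨ha, hb⟩ => hprime.ne_top (Ideal.span_singleton_eq_top.mpr (hab ▸ ha.mul hb))⟩
  rcases hprime.mem_or_mem (Ideal.mem_span_singleton.mpr ⟨1, by rw [hab, mul_one]⟩) with ha | hb
  · exact .inr (isUnit_of_dvd hab (Ideal.mem_span_singleton.mp ha))
  · exact .inl (isUnit_of_dvd (by rwa [mul_comm]) (Ideal.mem_span_singleton.mp hb))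

theorem stmt16_general {R : Type*} [CommRing R] (p : R)
    (hp : p ∈ nonZeroDivisors R) (hprime : (Ideal.span {p}).IsPrime)
    (M : Type*) [AddCommGroup M] [Module R M] (F₁ F₂ K : M →ₗ[R] M)
    (hF₁ : F₁ ∘ₗ F₁ = F₁) (hF₂ : F₂ ∘ₗ F₂ = F₂) (hsum : F₁ + F₂ = LinearMap.id)
    (h₁₂ : F₁ ∘ₗ F₂ = 0) (h₂₁ : F₂ ∘ₗ F₁ = 0)
    (hKF : K ∘ₗ F₁ = F₂ ∘ₗ K) (hK2 : K ∘ₗ K = p • LinearMap.id)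
    (b₁ : Module.Basis (Fin 1) R (LinearMap.range F₁)) (b₂ : Module.Basis (Fin 1) R (LinearMap.range F₂)) :
    Xor'
      (∃ e : M ≃ₗ[R] R × R,
        e.toLinearMap ∘ₗ F₁ = E₁ R ∘ₗ e.toLinearMap ∧
        e.toLinearMap ∘ₗ F₂ = E₂ R ∘ₗ e.toLinearMap ∧
        e.toLinearMap ∘ₗ K = J R p ∘ₗ e.toLinearMap)
      (∃ e : M ≃ₗ[R] R × R,
        e.toLinearMap ∘ₗ F₁ = E₁ R ∘ₗ e.toLinearMap ∧
        e.toLinearMap ∘ₗ F₂ = E₂ R ∘ₗ e.toLinearMap ∧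
        e.toLinearMap ∘ₗ K = J' R p ∘ₗ e.toLinearMap) := by
  obtain ⟨e₀, hE₁, hE₂⟩ := exists_equiv_prod_intertwines_E₁_E₂ b₁ b₂ hF₁ hF₂ hsum h₁₂ h₂₁
  obtain ⟨a, b, hab, hK⟩ := exists_intertwines_offDiagEnd e₀ hE₁ hE₂ hKF hK2
  have hJ := (e₀.exists_intertwines_iff_of_intertwines hE₁ hE₂ hK).trans
    (exists_intertwines_offDiagEnd_J_iff hab)
  have hJ' := (e₀.exists_intertwines_iff_of_intertwines hE₁ hE₂ hK).trans
    (exists_intertwines_offDiagEnd_J'_iff hab)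
  have key := xor_isUnit_of_mul_eq hp hprime hab
  rwa [← hJ, ← hJ'] at key

/-- Let `R` be a commutative local ring and `p ∈ R` a nonzerodivisor with `pR` prime. Let `M`
be an `R`-module with `R`-linear endomorphisms `F₁, F₂, K` such that `F₁, F₂` are idempotent
with `F₁ + F₂ = id` and `F₁∘F₂ = F₂∘F₁ = 0`, `K∘F₁ = F₂∘K`, `K² = p·id`, and the images
`F₁M, F₂M` are free `R`-modules of rank 1. Then `(M, F₁, F₂, K)` is isomorphic, via an
`R`-linear isomorphism intertwining the operators, to exactly one of the two standard data
`(T, E₁, E₂, J)` and `(T', E₁, E₂, J')`; in particular the latter two are not isomorphic. -/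
theorem stmt16 {R : Type*} [CommRing R] [IsLocalRing R] (p : R)
    (hp : p ∈ nonZeroDivisors R) (hprime : (Ideal.span {p}).IsPrime)
    (M : Type*) [AddCommGroup M] [Module R M] (F₁ F₂ K : M →ₗ[R] M)
    (hF₁ : F₁ ∘ₗ F₁ = F₁) (hF₂ : F₂ ∘ₗ F₂ = F₂) (hsum : F₁ + F₂ = LinearMap.id)
    (h₁₂ : F₁ ∘ₗ F₂ = 0) (h₂₁ : F₂ ∘ₗ F₁ = 0)
    (hKF : K ∘ₗ F₁ = F₂ ∘ₗ K) (hK2 : K ∘ₗ K = p • LinearMap.id)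
    (b₁ : Module.Basis (Fin 1) R (LinearMap.range F₁)) (b₂ : Module.Basis (Fin 1) R (LinearMap.range F₂)) :
    Xor'
      (∃ e : M ≃ₗ[R] R × R,
        e.toLinearMap ∘ₗ F₁ = E₁ R ∘ₗ e.toLinearMap ∧
        e.toLinearMap ∘ₗ F₂ = E₂ R ∘ₗ e.toLinearMap ∧
        e.toLinearMap ∘ₗ K = J R p ∘ₗ e.toLinearMap)
      (∃ e : M ≃ₗ[R] R × R,
        e.toLinearMap ∘ₗ F₁ = E₁ R ∘ₗ e.toLinearMap ∧
        e.toLinearMap ∘ₗ F₂ = E₂ R ∘ₗ e.toLinearMap ∧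
        e.toLinearMap ∘ₗ K = J' R p ∘ₗ e.toLinearMap) :=
  stmt16_general p hp hprime M F₁ F₂ K hF₁ hF₂ hsum h₁₂ h₂₁ hKF hK2 b₁ b₂
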